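/- For a non-negative integer alpha, a non-negative integer gamma, and the function F(w) = (e^{-w} - t e^{w})^{-gamma-1} viewed as a function of w (with t a parameter, |t| < 1), the alpha-th Taylor coefficient of F at w = 0, i.e. F^{(alpha)}(0)/alpha!, equals C(alpha+gamma, alpha) (1-t)^{-gamma-alpha-1} (1+t)^{alpha} * (1 + sum_{k=1}^{floor(alpha/2)} h_k (1-t)^{2k} (1+t)^{-2k}) for some rational numbers h_1, ..., h_{floor(alpha/2)} depending only on alpha and gamma (not on t). -/

import Mathlib

open Real Finset

/-- Coefficients in the expansion of the α-th derivative of `f^{-γ-1}`. -/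
private def dd (γ : ℕ) : ℕ → ℕ → ℚ
  | 0, m => if m = 0 then 1 else 0
  | α + 1, 0 => -(dd γ α 1)
  | α + 1, m + 1 => (γ + m + 1) * dd γ α m - (m + 2) * dd γ α (m + 2)

private lemma dd_eq_zero_of_lt (γ : ℕ) : ∀ α m, α < m → dd γ α m = 0 := by
  intro α
  induction α with
  | zero => intro m hm; simp only [dd]; rw [if_neg (by omega)]
  | succ α ih =>
    intro m hm
    match m, hm with
    | m + 1, hm =>
      rw [dd, ih m (by omega), ih (m+2) (by omega)]
      ring

private lemma dd_parity (γ : ℕ) : ∀ α m, α % 2 ≠ m % 2 → dd γ α m = 0 := by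
  intro α
  induction α with
  | zero => intro m hm; simp [dd]; omega
  | succ α ih =>
    intro m hm
    match m with
    | 0 => rw [dd, ih 1 (by omega)]; ring
    | m + 1 => rw [dd, ih m (by omega), ih (m+2) (by omega)]; ring

private lemma dd_diag (γ : ℕ) : ∀ α, dd γ α α = α.factorial * (α + γ).choose α := by
  intro α
  induction α with
  | zero => simp [dd]
  | succ α ih =>
    rw [dd, ih, dd_eq_zero_of_lt γ α (α+2) (by omega)]
    have h := Nat.add_one_mul_choose_eq (α + γ) α
    have : ((α + γ + 1) * (α + γ).choose α : ℚ) = ((α + γ + 1).choose (α+1) * (α + 1) : ℚ) := by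
      exact_mod_cast congrArg (Nat.cast : ℕ → ℚ) h
    have hrw : α + 1 + γ = α + γ + 1 := by ring
    rw [hrw]
    push_cast [Nat.factorial_succ] at *
    nlinarith [this]

private noncomputable def PP (γ α : ℕ) (x y : ℝ) (m : ℕ) : ℝ :=
  ((γ : ℝ) + 1 + m) * (dd γ α m : ℝ) * x ^ (-(γ : ℤ) - 2 - m) * y ^ (m + 1)

private noncomputable def GG (γ α : ℕ) (x y : ℝ) (j : ℕ) : ℝ :=
  -(((j : ℝ) + 1) * (dd γ α (j + 1) : ℝ)) * x ^ (-(γ : ℤ) - 1 - j) * y ^ j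

private lemma sum_step (γ α : ℕ) (x y : ℝ) (hx : x ≠ 0) :
    ∑ m ∈ range (α + 2), (dd γ (α + 1) m : ℝ) * x ^ (-(γ : ℤ) - 1 - m) * y ^ m
      = ∑ m ∈ range (α + 1),
        ((dd γ α m : ℝ) * (((-(γ : ℤ) - 1 - m : ℤ) : ℝ) * x ^ (-(γ : ℤ) - 1 - m - 1) * (-y)) * y ^ m
          + (dd γ α m : ℝ) * x ^ (-(γ : ℤ) - 1 - m) * ((m : ℝ) * y ^ (m - 1) * (-x))) := by
  have hL : ∑ m ∈ range (α + 2), (dd γ (α + 1) m : ℝ) * x ^ (-(γ : ℤ) - 1 - m) * y ^ m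
      = (∑ i ∈ range (α + 1), PP γ α x y i) + ∑ j ∈ range α, GG γ α x y j := by
    rw [Finset.sum_range_succ' _ (α + 1)]
    have h1 : ∀ i ∈ range (α + 1),
        (dd γ (α + 1) (i + 1) : ℝ) * x ^ (-(γ : ℤ) - 1 - (↑(i + 1) : ℤ)) * y ^ (i + 1)
          = PP γ α x y i + GG γ α x y (i + 1) := by
      intro i _
      have he : (-(γ : ℤ) - 1 - (↑(i + 1) : ℤ)) = -(γ : ℤ) - 2 - (i : ℤ) := by push_cast; ring
      rw [dd, he]
      unfold PP GG
      have he2 : (-(γ : ℤ) - 1 - (↑(i + 1) : ℤ)) = -(γ : ℤ) - 2 - (i : ℤ) := by push_cast; ring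
      rw [he2]
      push_cast
      ring
    rw [Finset.sum_congr rfl h1, Finset.sum_add_distrib]
    have h0 : (dd γ (α + 1) 0 : ℝ) * x ^ (-(γ : ℤ) - 1 - (↑(0:ℕ) : ℤ)) * y ^ (0:ℕ)
        = GG γ α x y 0 := by
      rw [dd]; unfold GG; push_cast; ring
    rw [h0, add_assoc, ← Finset.sum_range_succ' (GG γ α x y) (α + 1)]
    congr 1
    rw [Finset.sum_range_succ, Finset.sum_range_succ]
    have g1 : GG γ α x y α = 0 := by
      unfold GG; rw [dd_eq_zero_of_lt γ α (α + 1) (by omega)]; push_cast; ring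
    have g2 : GG γ α x y (α + 1) = 0 := by
      unfold GG; rw [dd_eq_zero_of_lt γ α (α + 2) (by omega)]; push_cast; ring
    rw [g1, g2]; ring
  rw [hL]
  conv_rhs => rw [Finset.sum_range_succ' _ α]
  have h2 : ∀ i ∈ range α,
      ((dd γ α (i+1) : ℝ) * (((-(γ : ℤ) - 1 - (↑(i+1):ℤ) : ℤ) : ℝ) * x ^ (-(γ : ℤ) - 1 - (↑(i+1):ℤ) - 1) * (-y)) * y ^ (i+1)
        + (dd γ α (i+1) : ℝ) * x ^ (-(γ : ℤ) - 1 - (↑(i+1):ℤ)) * (((i+1 : ℕ) : ℝ) * y ^ ((i+1) - 1) * (-x)))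
      = PP γ α x y (i + 1) + GG γ α x y i := by
    intro i _
    have hxe : x ^ (-(γ : ℤ) - 1 - (↑(i+1):ℤ)) = x ^ (-(γ : ℤ) - 1 - (i:ℤ)) * x⁻¹ := by
      rw [← zpow_sub_one₀ hx]; congr 1; push_cast; ring
    have hxe2 : x ^ (-(γ : ℤ) - 1 - (↑(i+1):ℤ) - 1) = x ^ (-(γ : ℤ) - 2 - (↑(i+1):ℤ)) := by
      congr 1; ring
    rw [hxe2, hxe]
    unfold PP GG
    push_cast
    field_simp
    ring
  rw [Finset.sum_congr rfl h2, Finset.sum_add_distrib]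
  have h3 : ((dd γ α 0 : ℝ) * (((-(γ : ℤ) - 1 - (↑(0:ℕ):ℤ) : ℤ) : ℝ) * x ^ (-(γ : ℤ) - 1 - (↑(0:ℕ):ℤ) - 1) * (-y)) * y ^ (0:ℕ)
        + (dd γ α 0 : ℝ) * x ^ (-(γ : ℤ) - 1 - (↑(0:ℕ):ℤ)) * (((0:ℕ) : ℝ) * y ^ ((0:ℕ) - 1) * (-x)))
      = PP γ α x y 0 := by
    unfold PP
    have : (-(γ : ℤ) - 1 - (↑(0:ℕ):ℤ) - 1) = -(γ : ℤ) - 2 - ((0:ℕ):ℤ) := by push_cast; ring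
    rw [this]
    push_cast
    ring
  rw [h3, Finset.sum_range_succ' (PP γ α x y) α]
  ring

private lemma key (γ : ℕ) (t : ℝ) (α : ℕ) : ∀ w : ℝ, Real.exp (-w) - t * Real.exp w ≠ 0 →
    iteratedDeriv α (fun w : ℝ => (Real.exp (-w) - t * Real.exp w) ^ (-(γ : ℤ) - 1)) w =
      ∑ m ∈ Finset.range (α + 1), (dd γ α m : ℝ) *
        (Real.exp (-w) - t * Real.exp w) ^ (-(γ : ℤ) - 1 - m) *
        (Real.exp (-w) + t * Real.exp w) ^ m := by
  induction α with
  | zero => intro w hw; simp [dd]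
  | succ α ih =>
    intro w hw
    rw [iteratedDeriv_succ]
    have hcont : Continuous fun u : ℝ => Real.exp (-u) - t * Real.exp u := by fun_prop
    have hopen : IsOpen {u : ℝ | Real.exp (-u) - t * Real.exp u ≠ 0} :=
      isOpen_compl_singleton.preimage hcont
    have hev : (iteratedDeriv α fun w : ℝ =>
          (Real.exp (-w) - t * Real.exp w) ^ (-(γ : ℤ) - 1)) =ᶠ[nhds w]
        (fun u => ∑ m ∈ Finset.range (α + 1), (dd γ α m : ℝ) *
          (Real.exp (-u) - t * Real.exp u) ^ (-(γ : ℤ) - 1 - m) *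
          (Real.exp (-u) + t * Real.exp u) ^ m) := by
      filter_upwards [hopen.mem_nhds hw] with u hu using ih u hu
    rw [hev.deriv_eq]
    have hf : HasDerivAt (fun u : ℝ => Real.exp (-u) - t * Real.exp u)
        (-(Real.exp (-w) + t * Real.exp w)) w := by
      have h1 : HasDerivAt (fun u : ℝ => Real.exp (-u)) (-Real.exp (-w)) w := by
        simpa [Function.comp_def] using (Real.hasDerivAt_exp (-w)).comp w (hasDerivAt_neg w)
      have h2 := (Real.hasDerivAt_exp w).const_mul t
      have := h1.fun_sub h2
      exact this.congr_deriv (by ring)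
    have hg : HasDerivAt (fun u : ℝ => Real.exp (-u) + t * Real.exp u)
        (-(Real.exp (-w) - t * Real.exp w)) w := by
      have h1 : HasDerivAt (fun u : ℝ => Real.exp (-u)) (-Real.exp (-w)) w := by
        simpa [Function.comp_def] using (Real.hasDerivAt_exp (-w)).comp w (hasDerivAt_neg w)
      have h2 := (Real.hasDerivAt_exp w).const_mul t
      have := h1.fun_add h2
      exact this.congr_deriv (by ring)
    have hsum : HasDerivAt (fun u => ∑ m ∈ Finset.range (α + 1), (dd γ α m : ℝ) *
          (Real.exp (-u) - t * Real.exp u) ^ (-(γ : ℤ) - 1 - m) *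
          (Real.exp (-u) + t * Real.exp u) ^ m)
        (∑ m ∈ Finset.range (α + 1),
          ((dd γ α m : ℝ) * (((-(γ : ℤ) - 1 - m : ℤ) : ℝ) *
              (Real.exp (-w) - t * Real.exp w) ^ (-(γ : ℤ) - 1 - m - 1) *
              (-(Real.exp (-w) + t * Real.exp w))) *
            (Real.exp (-w) + t * Real.exp w) ^ m
          + (dd γ α m : ℝ) * (Real.exp (-w) - t * Real.exp w) ^ (-(γ : ℤ) - 1 - m) *
            ((m : ℝ) * (Real.exp (-w) + t * Real.exp w) ^ (m - 1) *
              (-(Real.exp (-w) - t * Real.exp w))))) w := by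
      apply HasDerivAt.fun_sum
      intro m _
      have h1 : HasDerivAt (fun u : ℝ =>
            (Real.exp (-u) - t * Real.exp u) ^ (-(γ : ℤ) - 1 - m))
          (((-(γ : ℤ) - 1 - m : ℤ) : ℝ) *
            (Real.exp (-w) - t * Real.exp w) ^ (-(γ : ℤ) - 1 - m - 1) *
            (-(Real.exp (-w) + t * Real.exp w))) w := by
        simpa [mul_assoc, Function.comp_def] using
          (hasDerivAt_zpow (-(γ : ℤ) - 1 - m) (Real.exp (-w) - t * Real.exp w)
            (Or.inl hw)).comp w hf
      exact (h1.const_mul ((dd γ α m : ℝ))).mul (hg.pow m)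
    rw [hsum.deriv]
    exact (sum_step γ α (Real.exp (-w) - t * Real.exp w) (Real.exp (-w) + t * Real.exp w) hw).symm

/-- Taylor coefficient at 0 of `w ↦ (e^{-w} - t e^w)^{-γ-1}` for `|t| < 1`:
there exist rationals `h k` (depending only on α and γ) such that the stated
closed form holds. -/
theorem taylor_coeff_closed_form (α γ : ℕ) :
    ∃ h : ℕ → ℚ, ∀ t : ℝ, |t| < 1 →
      iteratedDeriv α
          (fun w : ℝ => (Real.exp (-w) - t * Real.exp w) ^ (-(γ : ℤ) - 1)) 0 /
        (α.factorial : ℝ) =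
      ((α + γ).choose α : ℝ) * (1 - t) ^ (-(γ : ℤ) - α - 1) * (1 + t) ^ α *
        (1 + ∑ k ∈ Finset.Icc 1 (α / 2),
          (h k : ℝ) * (1 - t) ^ (2 * k) * (1 + t) ^ (-(2 * k : ℤ))) := by
  refine ⟨fun k => dd γ α (α - 2 * k) /
    ((α.factorial : ℚ) * ((α + γ).choose α : ℚ)), fun t ht => ?_⟩
  obtain ⟨ht1, ht2⟩ := abs_lt.mp ht
  have hx : (0 : ℝ) < 1 - t := by linarith
  have hy : (0 : ℝ) < 1 + t := by linarith
  have hne : Real.exp (-(0:ℝ)) - t * Real.exp 0 ≠ 0 := by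
    simp [Real.exp_zero]; intro h; nlinarith
  rw [key γ t α 0 hne]
  simp only [neg_zero, Real.exp_zero, mul_one]
  -- now everything is in terms of x = 1 - t, y = 1 + t
  have hfac : ((α.factorial : ℚ)) ≠ 0 := by exact_mod_cast α.factorial_ne_zero
  have hC : (((α + γ).choose α : ℚ)) ≠ 0 := by
    exact_mod_cast (Nat.choose_pos (Nat.le_add_right α γ)).ne'
  have hxne : (1 - t) ≠ 0 := hx.ne'
  have hyne : (1 + t) ≠ 0 := hy.ne'
  -- Step 1: restrict the sum to even-offset indices
  have hstep1 : ∑ m ∈ Finset.range (α + 1), (dd γ α m : ℝ) *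
        (1 - t) ^ (-(γ : ℤ) - 1 - m) * (1 + t) ^ m
      = ∑ k ∈ Finset.range (α / 2 + 1), (dd γ α (α - 2 * k) : ℝ) *
        (1 - t) ^ (-(γ : ℤ) - 1 - (α - 2 * k : ℕ)) * (1 + t) ^ (α - 2 * k) := by
    rw [← Finset.sum_image (f := fun m => (dd γ α m : ℝ) *
        (1 - t) ^ (-(γ : ℤ) - 1 - m) * (1 + t) ^ m)
      (g := fun k => α - 2 * k) (s := Finset.range (α / 2 + 1))
      (by intro a ha b hb hab; simp only [Finset.coe_range, Set.mem_Iio] at ha hb; dsimp only at hab; omega)]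
    apply (Finset.sum_subset ?_ ?_).symm
    · intro m hm
      simp only [Finset.mem_image, Finset.mem_range] at hm ⊢
      obtain ⟨k, hk, rfl⟩ := hm
      omega
    · intro m hm hnot
      simp only [Finset.mem_image, Finset.mem_range] at hm hnot
      have : dd γ α m = 0 := by
        apply dd_parity
        intro hpar
        exact hnot ⟨(α - m) / 2, by omega, by omega⟩
      simp [this]
  rw [hstep1]
  -- Step 2: rewrite the RHS bracket as a sum over range (α/2 + 1)
  have h00 : ((dd γ α (α - 2 * 0) /
      ((α.factorial : ℚ) * ((α + γ).choose α : ℚ)) : ℚ) : ℝ) = 1 := by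
    rw [Nat.mul_zero, Nat.sub_zero, dd_diag]
    rw [div_self (by exact mul_ne_zero hfac hC)]
    norm_num
  have hins : Finset.range (α / 2 + 1) = insert 0 (Finset.Icc 1 (α / 2)) := by
    ext m; simp; omega
  have hstep2 : (1 : ℝ) + ∑ k ∈ Finset.Icc 1 (α / 2),
        ((dd γ α (α - 2 * k) / ((α.factorial : ℚ) * ((α + γ).choose α : ℚ)) : ℚ) : ℝ) *
          (1 - t) ^ (2 * k) * (1 + t) ^ (-(2 * k : ℤ))
      = ∑ k ∈ Finset.range (α / 2 + 1),
        ((dd γ α (α - 2 * k) / ((α.factorial : ℚ) * ((α + γ).choose α : ℚ)) : ℚ) : ℝ) *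
          (1 - t) ^ (2 * k) * (1 + t) ^ (-(2 * k : ℤ)) := by
    rw [hins, Finset.sum_insert (by simp)]
    congr 1
    rw [h00]
    norm_num
  rw [hstep2, Finset.sum_div, Finset.mul_sum]
  apply Finset.sum_congr rfl
  intro k hk
  have h2k : 2 * k ≤ α := by
    have := Finset.mem_range.mp hk; omega
  have ex : (1 - t) ^ (-(γ : ℤ) - 1 - ((α - 2 * k : ℕ) : ℤ))
      = (1 - t) ^ (-(γ : ℤ) - α - 1) * (1 - t) ^ (2 * k) := by
    rw [← zpow_natCast (1 - t) (2 * k), ← zpow_add₀ hxne]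
    congr 1
    omega
  have ey : (1 + t) ^ (α - 2 * k : ℕ)
      = (1 + t) ^ α * (1 + t) ^ (-(2 * k : ℤ)) := by
    rw [← zpow_natCast (1 + t) (α - 2 * k), ← zpow_natCast (1 + t) α, ← zpow_add₀ hyne]
    congr 1
    omega
  have hq : ((dd γ α (α - 2 * k) / ((α.factorial : ℚ) * ((α + γ).choose α : ℚ)) : ℚ) : ℝ)
      = (dd γ α (α - 2 * k) : ℝ) / ((α.factorial : ℝ) * ((α + γ).choose α : ℝ)) := by
    push_cast; ring
  rw [ex, ey, hq]
  have hF : (α.factorial : ℝ) ≠ 0 := by exact_mod_cast α.factorial_ne_zero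
  have hCC : ((α + γ).choose α : ℝ) ≠ 0 := by
    exact_mod_cast (Nat.choose_pos (Nat.le_add_right α γ)).ne'
  set X1 := (1 - t) ^ (-(γ : ℤ) - α - 1) with hX1
  set Y2 := (1 + t) ^ (-(2 * (k : ℤ))) with hY2
  field_simp
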